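/- Let p be a prime and let G and H be finite abelian p-groups of exponent dividing p^e. Then δ_G(n) = −α_p(G) + Σ_{k=1}^{e} r̃_k(G)·{(n−1)/p^k} for all integers n, and δ_{G×H}(n) = δ_G(n) + δ_H(n). -/

import Mathlib

open scoped Classical

/-- The ring `F_q[t]/(t^n)` where `q = p^f`. -/
abbrev Rq (p f n : ℕ) [Fact p.Prime] : Type :=
  Polynomial (GaloisField p f) ⧸
    Ideal.span {(Polynomial.X : Polynomial (GaloisField p f)) ^ n}

/-- The class of `t` in `F_q[t]/(t^n)`. -/
noncomputable def tbar (p f n : ℕ) [Fact p.Prime] : Rq p f n :=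
  Ideal.Quotient.mk _ (Polynomial.X : Polynomial (GaloisField p f))

/-- The group of principal units `U_n = (1+𝔭)/(1+𝔭^n)`, realised as the subgroup of
units of `F_q[t]/(t^n)` that are congruent to `1` modulo `t`. -/
noncomputable def Un (p f n : ℕ) [Fact p.Prime] : Subgroup (Rq p f n)ˣ where
  carrier := {u | (u : Rq p f n) - 1 ∈ Ideal.span {tbar p f n}}
  one_mem' := by simp
  mul_mem' := by
    intro a b ha hb
    simp only [Set.mem_setOf_eq] at ha hb ⊢
    have h : ((a * b : (Rq p f n)ˣ) : Rq p f n) - 1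
        = (a : Rq p f n) * ((b : Rq p f n) - 1) + ((a : Rq p f n) - 1) := by
      push_cast; ring
    rw [h]
    exact Ideal.add_mem _ (Ideal.mul_mem_left _ _ hb) ha
  inv_mem' := by
    intro a ha
    have h1 : ((a⁻¹ : (Rq p f n)ˣ) : Rq p f n) * (a : Rq p f n) = 1 := by
      rw [← Units.val_mul, inv_mul_cancel a, Units.val_one]
    have key : ((a⁻¹ : (Rq p f n)ˣ) : Rq p f n) - 1
        = -(((a⁻¹ : (Rq p f n)ˣ) : Rq p f n) * ((a : Rq p f n) - 1)) := by
      linear_combination h1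
    rw [Set.mem_setOf_eq, key]
    exact neg_mem (Ideal.mul_mem_left _ _ ha)

/-- The `ℓ^k`-rank of a finite abelian group `A`, i.e. the `F_ℓ`-dimension of
`A^{ℓ^{k-1}}/A^{ℓ^k}` (encoded as `log_ℓ` of the cardinality of that elementary
abelian quotient). -/
noncomputable def pkRank (A : Type*) [CommGroup A] (ℓ k : ℕ) : ℕ :=
  Nat.log ℓ (Nat.card
    ((powMonoidHom (ℓ ^ (k - 1)) : A →* A).range ⧸
      ((powMonoidHom (ℓ ^ k) : A →* A).range.subgroupOf
        (powMonoidHom (ℓ ^ (k - 1)) : A →* A).range)))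

/-- `α_G(A)`: the number of subgroups of `A` isomorphic to `G`. -/
noncomputable def numIsoSubgroups (G A : Type*) [Group G] [Group A] : ℕ :=
  Nat.card {H : Subgroup A // Nonempty (H ≃* G)}

/-- `|Inj(G,A)|`: the number of injective group homomorphisms `G → A`. -/
noncomputable def numInj (G A : Type*) [Group G] [Group A] : ℕ :=
  Nat.card {φ : G →* A // Function.Injective φ}

/-- The `ℓ`-Sylow subgroup (`ℓ`-primary component) of an abelian group. -/
noncomputable def primaryPart (G : Type*) [CommGroup G] (ℓ : ℕ) (hℓ : ℓ.Prime) : Subgroup G :=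
  haveI : Fact ℓ.Prime := ⟨hℓ⟩
  CommGroup.primaryComponent G ℓ

/-- The subgroup of elements of order coprime to `p`. -/
def coprimePart (G : Type*) [CommGroup G] (p : ℕ) : Subgroup G where
  carrier := {g | Nat.Coprime (orderOf g) p}
  one_mem' := by simp [Nat.Coprime]
  mul_mem' := by
    intro a b ha hb
    exact Nat.Coprime.coprime_dvd_left ((Commute.all a b).orderOf_mul_dvd_mul_orderOf)
      (Nat.Coprime.mul ha hb)
  inv_mem' := by
    intro a ha
    simpa [orderOf_inv] using ha

/-- `δ(n,k) = {n/p^k} - {n/p^{k-1}}`. -/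
noncomputable def deltaNK (p : ℕ) (n : ℤ) (k : ℕ) : ℝ :=
  Int.fract ((n : ℝ) / (p : ℝ) ^ k) - Int.fract ((n : ℝ) / (p : ℝ) ^ (k - 1))

/-- `α_p(G) = Σ_{k=1}^e (p-1)/p^k · r_k(G)`. -/
noncomputable def alphaP (p e : ℕ) (G : Type*) [CommGroup G] : ℝ :=
  ∑ k ∈ Finset.Icc 1 e, ((p : ℝ) - 1) / (p : ℝ) ^ k * (pkRank G p k : ℝ)

/-- `δ_G(n) = -α_p(G) + Σ_{k=1}^e r_k(G)·δ(n-1,k)`. -/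
noncomputable def deltaG (p e : ℕ) (G : Type*) [CommGroup G] (n : ℤ) : ℝ :=
  -alphaP p e G + ∑ k ∈ Finset.Icc 1 e, (pkRank G p k : ℝ) * deltaNK p (n - 1) k

/-- `ε(G,q,n)` with `q = p^f`. -/
noncomputable def epsilonGQN (p e f : ℕ) (G : Type*) [CommGroup G] (n : ℕ) : ℝ :=
  ∏ k ∈ Finset.Icc 1 e, ∏ j ∈ Finset.range (pkRank G p k - pkRank G p (k + 1)),
    (1 - (p : ℝ) ^ ((pkRank G p (k + 1) : ℤ) + j - 1) /
      ((p : ℝ) ^ f) ^ (((p : ℝ) - 1) * ((n : ℝ) - 1) / (p : ℝ) ^ k + deltaNK p ((n : ℤ) - 1) k))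

/-!
The first identity is Abel summation in `k`: the boundary terms vanish because
`{(n-1)/p^0} = 0` and `r_{e+1}(G) = 0`. For the second, `(G × H)^m = G^m × H^m`, so the relative
index `[A^{p^(k-1)} : A^{p^k}]` is multiplicative in `A`; it is a power of `p`, being the order of
a finite group killed by `p`, so the ranks `r_k = log_p` of these indices add up.
-/

namespace Subgroup

variable {G G' : Type*} [Group G] [Group G']

theorem relIndex_prod (H₁ K₁ : Subgroup G) (H₂ K₂ : Subgroup G') :
    (H₁.prod H₂).relIndex (K₁.prod K₂) = H₁.relIndex K₁ * H₂.relIndex K₂ := by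
  have h : (H₁.prod H₂).subgroupOf (K₁.prod K₂) =
      ((H₁.subgroupOf K₁).prod (H₂.subgroupOf K₂)).comap (K₁.prodEquiv K₂).toMonoidHom := by
    ext; rfl
  rw [relIndex, h, index_comap_of_surjective _ (MulEquiv.surjective _), index_prod]
  rfl

end Subgroup

section PowRange

variable {A B : Type*} [CommGroup A] [CommGroup B]

theorem range_powMonoidHom_prod (m : ℕ) :
    (powMonoidHom m : A × B →* A × B).range =
      (powMonoidHom m : A →* A).range.prod (powMonoidHom m : B →* B).range := by
  rw [← MonoidHom.range_prodMap]
  rfl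

theorem range_powMonoidHom_eq_bot_of_exponent_dvd {m : ℕ} (h : Monoid.exponent A ∣ m) :
    (powMonoidHom m : A →* A).range = ⊥ := by
  rw [eq_bot_iff]
  rintro _ ⟨a, rfl⟩
  exact Monoid.exponent_dvd_iff_forall_pow_eq_one.mp h a

theorem range_powMonoidHom_anti {m n : ℕ} (h : m ∣ n) :
    (powMonoidHom n : A →* A).range ≤ (powMonoidHom m : A →* A).range := by
  obtain ⟨c, rfl⟩ := h
  rintro _ ⟨a, rfl⟩
  exact ⟨a ^ c, by simp [← pow_mul, mul_comm]⟩

theorem pkRank_eq_log_relIndex (p k : ℕ) :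
    pkRank A p k = Nat.log p ((powMonoidHom (p ^ k) : A →* A).range.relIndex
      (powMonoidHom (p ^ (k - 1)) : A →* A).range) :=
  rfl

theorem exists_relIndex_range_powMonoidHom_eq_pow [Finite A] {p : ℕ} [Fact p.Prime] (k : ℕ) :
    ∃ s, (powMonoidHom (p ^ k) : A →* A).range.relIndex
      (powMonoidHom (p ^ (k - 1)) : A →* A).range = p ^ s := by
  have hQ : IsPGroup p ((powMonoidHom (p ^ (k - 1)) : A →* A).range ⧸
      (powMonoidHom (p ^ k) : A →* A).range.subgroupOf (powMonoidHom (p ^ (k - 1))).range) := by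
    -- `A^{p^(k-1)} / A^{p^k}` is killed by `p`
    refine fun x ↦ ⟨1, ?_⟩
    induction x using QuotientGroup.induction_on with
    | H x =>
      obtain ⟨_, a, rfl⟩ := x
      rw [pow_one, ← QuotientGroup.mk_pow, QuotientGroup.eq_one_iff, Subgroup.mem_subgroupOf]
      have hdvd : p ^ k ∣ p ^ (k - 1) * p := by
        rw [← pow_succ]; exact pow_dvd_pow p (by omega)
      exact range_powMonoidHom_anti hdvd ⟨a, by simp [← pow_mul]⟩
  exact hQ.exists_card_eq

theorem pkRank_prod [Finite A] [Finite B] {p : ℕ} (hp : p.Prime) (k : ℕ) :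
    pkRank (A × B) p k = pkRank A p k + pkRank B p k := by
  have : Fact p.Prime := ⟨hp⟩
  obtain ⟨s, hs⟩ := exists_relIndex_range_powMonoidHom_eq_pow (A := A) (p := p) k
  obtain ⟨t, ht⟩ := exists_relIndex_range_powMonoidHom_eq_pow (A := B) (p := p) k
  simp only [pkRank_eq_log_relIndex, range_powMonoidHom_prod, Subgroup.relIndex_prod, hs, ht,
    ← pow_add, Nat.log_pow hp.one_lt]

theorem pkRank_eq_zero_of_exponent_dvd {p e k : ℕ} (h : Monoid.exponent A ∣ p ^ e) (hk : e < k) :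
    pkRank A p k = 0 := by
  rw [pkRank_eq_log_relIndex, range_powMonoidHom_eq_bot_of_exponent_dvd
    (h.trans (pow_dvd_pow p (Nat.le_sub_one_of_lt hk))), Subgroup.relIndex_bot_right,
    Nat.log_one_right]

end PowRange

theorem Finset.sum_Icc_by_parts {R : Type*} [CommRing R] (r a : ℕ → R) (e : ℕ) :
    ∑ k ∈ Finset.Icc 1 e, r k * (a k - a (k - 1)) + r 1 * a 0 =
      ∑ k ∈ Finset.Icc 1 e, (r k - r (k + 1)) * a k + r (e + 1) * a e := by
  induction e with
  | zero => simp
  | succ e ih =>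
    rw [Finset.sum_Icc_succ_top (by omega), Finset.sum_Icc_succ_top (by omega)]
    simp only [Nat.add_sub_cancel]
    linear_combination ih

theorem stmt_9_general (p e : ℕ) (hp : p.Prime) (G H : Type*) [CommGroup G] [CommGroup H]
    [Finite G] [Finite H]
    (hexpG : Monoid.exponent G ∣ p ^ e) :
    (∀ n : ℤ, deltaG p e G n = -alphaP p e G +
        ∑ k ∈ Finset.Icc 1 e, ((pkRank G p k : ℝ) - (pkRank G p (k + 1) : ℝ)) *
          Int.fract (((n : ℝ) - 1) / (p : ℝ) ^ k)) ∧
    (∀ n : ℤ, deltaG p e (G × H) n = deltaG p e G n + deltaG p e H n) := by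
  refine ⟨fun n ↦ ?_, fun n ↦ ?_⟩
  · have hfract_zero : Int.fract (((n : ℝ) - 1) / (p : ℝ) ^ 0) = 0 := by
      rw [pow_zero, div_one, ← Int.cast_one, ← Int.cast_sub, Int.fract_intCast]
    have hrank_top : (pkRank G p (e + 1) : ℝ) = 0 := by
      exact_mod_cast pkRank_eq_zero_of_exponent_dvd hexpG e.lt_succ_self
    have hparts := Finset.sum_Icc_by_parts (fun k ↦ (pkRank G p k : ℝ))
      (fun k ↦ Int.fract (((n : ℝ) - 1) / (p : ℝ) ^ k)) e
    simp only [hfract_zero, hrank_top, mul_zero, zero_mul, add_zero] at hparts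
    rw [deltaG, ← hparts]
    simp only [deltaNK, Int.cast_sub, Int.cast_one]
  · simp only [deltaG, alphaP, pkRank_prod hp, Nat.cast_add, mul_add, add_mul,
      Finset.sum_add_distrib]
    ring

/-- `δ_G(n) = −α_p(G) + Σ_{k=1}^e r̃_k(G)·{(n−1)/p^k}` and
`δ_{G×H}(n) = δ_G(n) + δ_H(n)`. -/
theorem stmt_9 (p e : ℕ) (hp : p.Prime) (G H : Type*) [CommGroup G] [CommGroup H]
    [Finite G] [Finite H] (hG : IsPGroup p G) (hH : IsPGroup p H)
    (hexpG : Monoid.exponent G ∣ p ^ e) (hexpH : Monoid.exponent H ∣ p ^ e) :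
    (∀ n : ℤ, deltaG p e G n = -alphaP p e G +
        ∑ k ∈ Finset.Icc 1 e, ((pkRank G p k : ℝ) - (pkRank G p (k + 1) : ℝ)) *
          Int.fract (((n : ℝ) - 1) / (p : ℝ) ^ k)) ∧
    (∀ n : ℤ, deltaG p e (G × H) n = deltaG p e G n + deltaG p e H n) :=
  stmt_9_general p e hp G H hexpG
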